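/- arXiv:math/0410605 — 2 statements merged into one kernel-verified Lean document; each statement's English description precedes it below -/
import Mathlib

section
/- Let 0<q<1 and let z be the operator on ℓ²(ℕ) with z f_j = (1-q^{2(j+1)})^{1/2} f_{j+1}. Set y = 1 - z z*. Then y is a positive self-adjoint operator with y f_j = q^{2j} f_j for all j, its spectrum is {q^{2j} : j ∈ ℕ} ∪ {0}, and the commutation relations z y = q⁻² y z and z* y = q² y z* hold. -/
/-!
Since `z` is a weighted shift, `z*` is the backward shift with the same (real) weights, so
`z z*` kills `f₀` and multiplies `f_{j+1}` by `1 - q^{2(j+1)}`; hence `y` is the diagonal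
operator with entries `q^{2j}`. A diagonal operator with bounded entries `d` lies in the image of
the algebra homomorphism `ℓ^∞ → B(ℓ^p)`, so its spectrum is contained in the spectrum of `d` in
`ℓ^∞`, which is `closure (range d)`; conversely each `d i` is an eigenvalue. As `q^{2j} → 0`,
this closure is `{q^{2j}} ∪ {0}`, and `y ≥ 0` because it is self-adjoint with nonnegative
spectrum. The commutation relations are identities between operators that shift the degree by
one, checked on the basis.
-/

open ContinuousLinearMap

/-- The standard orthonormal basis of ℓ²(ℕ). -/
noncomputable def fockBasis (j : ℕ) : lp (fun _ : ℕ => ℂ) 2 := lp.single 2 j 1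

open scoped ENNReal ComplexOrder lp InnerProductSpace

namespace lp

variable {ι 𝕜 : Type*} {p : ℝ≥0∞}

section NormedField

variable [NormedField 𝕜]

theorem norm_infty_mul_apply_le (d : ℓ^∞(ι, 𝕜)) (x : ℓ^p(ι, 𝕜)) (i : ι) :
    ‖d i * x i‖ ≤ ‖d‖ * ‖x i‖ := by
  rw [norm_mul]
  exact mul_le_mul_of_nonneg_right (norm_apply_le_norm ENNReal.top_ne_zero d i) (norm_nonneg _)

theorem memℓp_infty_mul (d : ℓ^∞(ι, 𝕜)) (x : ℓ^p(ι, 𝕜)) : Memℓp (fun i => d i * x i) p :=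
  ((lp.memℓp x).norm.const_mul ‖d‖).mono (norm_infty_mul_apply_le d x)

theorem spectrum_subset_closure_range (d : ℓ^∞(ι, 𝕜)) : spectrum 𝕜 d ⊆ closure (Set.range d) := by
  intro μ hμ
  by_contra hμd
  obtain ⟨ε, hε, hεd⟩ : ∃ ε > 0, ∀ i, ε ≤ ‖μ - d i‖ := by
    simpa [Metric.mem_closure_iff, dist_eq_norm] using hμd
  have hne (i : ι) : μ - d i ≠ 0 := norm_pos_iff.mp (hε.trans_le (hεd i))
  let e : ℓ^∞(ι, 𝕜) := ⟨fun i => (μ - d i)⁻¹, memℓp_infty ⟨ε⁻¹, by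
    rintro _ ⟨i, rfl⟩
    simpa using inv_anti₀ hε (hεd i)⟩⟩
  exact hμ (IsUnit.of_mul_eq_one e (lp.ext <| funext fun i => mul_inv_cancel₀ (hne i)))

variable [Fact (1 ≤ p)]

variable (𝕜 p) in
noncomputable def diagonal : ℓ^∞(ι, 𝕜) →ₐ[𝕜] ℓ^p(ι, 𝕜) →L[𝕜] ℓ^p(ι, 𝕜) where
  toFun d := LinearMap.mkContinuous
    { toFun x := ⟨fun i => d i * x i, memℓp_infty_mul d x⟩
      map_add' x y := lp.ext <| funext fun i => mul_add _ _ _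
      map_smul' c x := lp.ext <| funext fun i => mul_left_comm _ c _ }
    ‖d‖ fun x => by
      have hp : p ≠ 0 := (zero_lt_one.trans_le Fact.out).ne'
      have := norm_mono (x := (⟨_, memℓp_infty_mul d x⟩ : ℓ^p(ι, 𝕜))) (y := ‖d‖ • toNorm x) hp
        fun i => by simpa [toNorm] using norm_infty_mul_apply_le d x i
      simpa [norm_smul, norm_toNorm] using this
  map_one' := by ext x i; exact one_mul _
  map_mul' d e := by ext x i; exact mul_assoc _ _ _
  map_zero' := by ext x i; exact zero_mul _
  map_add' d e := by ext x i; exact add_mul _ _ _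
  commutes' c := by ext x i; exact congrArg (· * x i) rfl

@[simp]
theorem diagonal_apply_apply (d : ℓ^∞(ι, 𝕜)) (x : ℓ^p(ι, 𝕜)) (i : ι) :
    diagonal 𝕜 p d x i = d i * x i :=
  rfl

theorem diagonal_single [DecidableEq ι] (d : ℓ^∞(ι, 𝕜)) (i : ι) (a : 𝕜) :
    diagonal 𝕜 p d (lp.single p i a) = d i • lp.single p i a := by
  ext j
  rcases eq_or_ne j i with rfl | hji
  · simp
  · simp [Pi.single_eq_of_ne hji]

end NormedField

variable [NontriviallyNormedField 𝕜] [CompleteSpace 𝕜] [Fact (1 ≤ p)]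

theorem apply_mem_spectrum_diagonal (d : ℓ^∞(ι, 𝕜)) (i : ι) :
    d i ∈ spectrum 𝕜 (diagonal 𝕜 p d) := by
  classical
  rw [ContinuousLinearMap.spectrum_eq]
  refine Module.End.HasEigenvalue.mem_spectrum <| Module.End.hasEigenvalue_of_hasEigenvector
    (x := lp.single p i 1) ⟨Module.End.mem_eigenspace_iff.mpr (diagonal_single d i 1),
      fun h => one_ne_zero (α := 𝕜) (by simpa using congrArg (fun x : ℓ^p(ι, 𝕜) => x i) h)⟩

theorem spectrum_diagonal (d : ℓ^∞(ι, 𝕜)) :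
    spectrum 𝕜 (diagonal 𝕜 p d) = closure (Set.range d) := by
  refine ((AlgHom.spectrum_apply_subset (diagonal 𝕜 p) d).trans
    (spectrum_subset_closure_range d)).antisymm ?_
  exact (spectrum.isClosed _).closure_subset_iff.mpr <|
    Set.range_subset_iff.mpr <| apply_mem_spectrum_diagonal d

theorem spectrum_eq_closure_range_of_apply_single [DecidableEq ι] (hp : p ≠ ∞)
    {T : ℓ^p(ι, 𝕜) →L[𝕜] ℓ^p(ι, 𝕜)} {d : ι → 𝕜} (hd : BddAbove (Set.range fun i => ‖d i‖))
    (hT : ∀ i, T (lp.single p i 1) = d i • lp.single p i 1) :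
    spectrum 𝕜 T = closure (Set.range d) := by
  have : T = diagonal 𝕜 p ⟨d, memℓp_infty hd⟩ :=
    ext_continuousLinearMap hp fun i => ContinuousLinearMap.ext_ring <| by
      simpa [diagonal_single] using hT i
  rw [this, spectrum_diagonal]

end lp

theorem Filter.Tendsto.closure_range_eq_insert {X : Type*} [TopologicalSpace X] [T2Space X]
    {f : ℕ → X} {x : X} (hf : Tendsto f atTop (nhds x)) :
    closure (Set.range f) = insert x (Set.range f) :=
  (closure_minimal (Set.subset_insert _ _) hf.isCompact_insert_range.isClosed).antisymm <|
    Set.insert_subset (mem_closure_of_tendsto hf (.of_forall Set.mem_range_self)) subset_closure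

theorem fockBasis_apply (j i : ℕ) : fockBasis j i = if i = j then 1 else 0 := by
  simp [fockBasis, Pi.single_apply]

theorem inner_fockBasis_left (j : ℕ) (x : ℓ²(ℕ, ℂ)) : ⟪fockBasis j, x⟫_ℂ = x j := by
  simp [fockBasis, lp.inner_single_left]

theorem fockBasis_ext {A B : ℓ²(ℕ, ℂ) →L[ℂ] ℓ²(ℕ, ℂ)} (h : ∀ j, A (fockBasis j) = B (fockBasis j)) :
    A = B :=
  lp.ext_continuousLinearMap ENNReal.ofNat_ne_top fun j => ContinuousLinearMap.ext_ring (h j)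

section WeightedShift

variable {z : ℓ²(ℕ, ℂ) →L[ℂ] ℓ²(ℕ, ℂ)} {c : ℕ → ℂ}

theorem adjoint_apply_fockBasis_apply (hz : ∀ j, z (fockBasis j) = c j • fockBasis (j + 1))
    (k i : ℕ) : adjoint z (fockBasis k) i = starRingEnd ℂ (c i) * fockBasis k (i + 1) := by
  rw [← inner_fockBasis_left, adjoint_inner_right, hz, inner_smul_left, inner_fockBasis_left]

theorem adjoint_apply_fockBasis_zero (hz : ∀ j, z (fockBasis j) = c j • fockBasis (j + 1)) :
    adjoint z (fockBasis 0) = 0 := by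
  ext i
  simp [adjoint_apply_fockBasis_apply hz, fockBasis_apply]

theorem adjoint_apply_fockBasis_succ (hz : ∀ j, z (fockBasis j) = c j • fockBasis (j + 1))
    (j : ℕ) : adjoint z (fockBasis (j + 1)) = starRingEnd ℂ (c j) • fockBasis j := by
  ext i
  by_cases h : i = j <;> simp [adjoint_apply_fockBasis_apply hz, fockBasis_apply, h]

theorem smul_comp_eq_comp_of_shift {y : ℓ²(ℕ, ℂ) →L[ℂ] ℓ²(ℕ, ℂ)} {r : ℂ}
    (hz : ∀ j, z (fockBasis j) = c j • fockBasis (j + 1))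
    (hy : ∀ j, y (fockBasis j) = r ^ j • fockBasis j) :
    r • (z ∘L y) = y ∘L z := by
  refine fockBasis_ext fun j => ?_
  simp only [smul_apply, comp_apply, hy, hz, map_smul, smul_smul, pow_succ]
  ring_nf

theorem adjoint_comp_eq_smul_comp_of_shift {y : ℓ²(ℕ, ℂ) →L[ℂ] ℓ²(ℕ, ℂ)} {r : ℂ}
    (hz : ∀ j, z (fockBasis j) = c j • fockBasis (j + 1))
    (hy : ∀ j, y (fockBasis j) = r ^ j • fockBasis j) :
    adjoint z ∘L y = r • (y ∘L adjoint z) := by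
  refine fockBasis_ext fun j => ?_
  cases j with
  | zero => simp [hy, adjoint_apply_fockBasis_zero hz]
  | succ j =>
    simp only [smul_apply, comp_apply, hy, adjoint_apply_fockBasis_succ hz, map_smul, smul_smul,
      pow_succ]
    ring_nf

end WeightedShift

theorem one_sub_comp_adjoint_apply_fockBasis {q : ℝ} (hq : |q| ≤ 1) {z : ℓ²(ℕ, ℂ) →L[ℂ] ℓ²(ℕ, ℂ)}
    (hz : ∀ j : ℕ, z (fockBasis j) = (√(1 - q ^ (2 * (j + 1))) : ℂ) • fockBasis (j + 1)) (j : ℕ) :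
    (1 - z ∘L adjoint z) (fockBasis j) = ((q : ℂ) ^ 2) ^ j • fockBasis j := by
  cases j with
  | zero => simp [adjoint_apply_fockBasis_zero hz]
  | succ j =>
    have h : q ^ (2 * (j + 1)) ≤ 1 := by
      rw [pow_mul]; exact pow_le_one₀ (sq_nonneg q) ((sq_le_one_iff_abs_le_one q).mpr hq)
    rw [sub_apply, comp_apply, adjoint_apply_fockBasis_succ hz, map_smul, hz, smul_smul,
      Complex.conj_ofReal, ← Complex.ofReal_mul, Real.mul_self_sqrt (sub_nonneg.mpr h),
      one_apply_eq_self, ← pow_mul]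
    push_cast
    rw [sub_smul, one_smul, sub_sub_cancel]

theorem stmt_2 (q : ℝ) (hq0 : 0 < q) (hq1 : q < 1)
    (z : lp (fun _ : ℕ => ℂ) 2 →L[ℂ] lp (fun _ : ℕ => ℂ) 2)
    (hz : ∀ j : ℕ, z (fockBasis j) =
      (Real.sqrt (1 - q ^ (2 * (j + 1))) : ℂ) • fockBasis (j + 1))
    (y : lp (fun _ : ℕ => ℂ) 2 →L[ℂ] lp (fun _ : ℕ => ℂ) 2)
    (hy : y = 1 - z ∘L adjoint z) :
    y.IsPositive ∧
    IsSelfAdjoint y ∧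
    (∀ j : ℕ, y (fockBasis j) = ((q : ℂ) ^ (2 * j)) • fockBasis j) ∧
    spectrum ℂ y = {x : ℂ | ∃ j : ℕ, x = (q : ℂ) ^ (2 * j)} ∪ {0} ∧
    z ∘L y = (((q : ℂ) ^ 2)⁻¹) • (y ∘L z) ∧
    adjoint z ∘L y = ((q : ℂ) ^ 2) • (y ∘L adjoint z) := by
  subst hy
  have hq : |q| ≤ 1 := abs_le.mpr ⟨by linarith, hq1.le⟩
  have hq2 : ‖(q : ℂ) ^ 2‖ < 1 := by
    simpa [norm_pow, abs_of_pos hq0] using pow_lt_one₀ hq0.le hq1 two_ne_zero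
  have heigen := one_sub_comp_adjoint_apply_fockBasis hq hz
  have hspec :
      spectrum ℂ (1 - z ∘L adjoint z) = insert 0 (Set.range fun j => ((q : ℂ) ^ 2) ^ j) := by
    rw [lp.spectrum_eq_closure_range_of_apply_single ENNReal.ofNat_ne_top ⟨1, ?_⟩ heigen,
      (tendsto_pow_atTop_nhds_zero_of_norm_lt_one hq2).closure_range_eq_insert]
    rintro _ ⟨j, rfl⟩
    simpa [norm_pow] using pow_le_one₀ (norm_nonneg _) hq2.le
  have hsa : IsSelfAdjoint (1 - z ∘L adjoint z) := (IsSelfAdjoint.one _).sub (.mul_star_self z)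
  refine ⟨?_, hsa, fun j => by rw [heigen, pow_mul], ?_, ?_,
    adjoint_comp_eq_smul_comp_of_shift hz heigen⟩
  · rw [← nonneg_iff_isPositive,
      StarOrderedRing.nonneg_iff_spectrum_nonneg (R := ℂ) _ hsa.isStarNormal, hspec]
    rintro _ (rfl | ⟨j, rfl⟩)
    · exact le_rfl
    · simpa using Complex.zero_le_real.mpr (pow_nonneg (sq_nonneg q) j)
  · rw [hspec]
    ext x
    simp [pow_mul, eq_comm]
  · rw [eq_inv_smul_iff₀ (pow_ne_zero 2 (Complex.ofReal_ne_zero.mpr hq0.ne')),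
      smul_comp_eq_comp_of_shift hz heigen]
end

section
/- Let 0<q<1 and let z be the operator on ℓ²(ℕ) with z f_j = (1-q^{2(j+1)})^{1/2} f_{j+1}. Then the Fock representation of the twisted CCR algebra is irreducible: any bounded operator commuting with both z and z* is a scalar multiple of the identity. -/
/-!
`z` is a weighted shift, so `z* z` is diagonal in the basis `fockBasis` with entries
`1 - q ^ (2 * (j + 1))`, which are pairwise distinct. An operator commuting with `z` and `z*`
commutes with `z* z`, hence is diagonal too; commuting with `z` then forces consecutive
diagonal entries to agree, because the weights do not vanish.
-/

open ContinuousLinearMap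

open scoped lp ComplexConjugate

namespace fockBasis

lemma apply_self (j : ℕ) : fockBasis j j = 1 :=
  lp.single_apply_self (E := fun _ : ℕ => ℂ) 2 j 1

lemma apply_of_ne {i j : ℕ} (h : i ≠ j) : fockBasis j i = 0 :=
  lp.single_apply_ne (E := fun _ : ℕ => ℂ) 2 j 1 h

lemma inner_left (j : ℕ) (x : ℓ²(ℕ, ℂ)) : inner ℂ (fockBasis j) x = x j := by
  simp [fockBasis, lp.inner_single_left]

lemma eq_smul_of_apply_eq_zero {x : ℓ²(ℕ, ℂ)} {j : ℕ} (h : ∀ i ≠ j, x i = 0) :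
    x = x j • fockBasis j := by
  ext i
  by_cases hij : i = j
  · subst hij; simp [apply_self]
  · simp [h i hij, apply_of_ne hij]

lemma ext_continuousLinearMap {A B : ℓ²(ℕ, ℂ) →L[ℂ] ℓ²(ℕ, ℂ)}
    (h : ∀ j, A (fockBasis j) = B (fockBasis j)) : A = B :=
  lp.ext_continuousLinearMap ENNReal.ofNat_ne_top fun j => ext_ring (h j)

end fockBasis

/-- The eigenspaces of `D` are the lines spanned by the `fockBasis j`. -/
lemma apply_fockBasis_eq_smul_of_comp_diagonal {B D : ℓ²(ℕ, ℂ) →L[ℂ] ℓ²(ℕ, ℂ)} {d : ℕ → ℂ}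
    (hD : ∀ x i, D x i = d i * x i) (hd : Function.Injective d) (hBD : B ∘L D = D ∘L B)
    (j : ℕ) : B (fockBasis j) = B (fockBasis j) j • fockBasis j := by
  refine fockBasis.eq_smul_of_apply_eq_zero fun i hij => ?_
  have hDj : D (fockBasis j) = d j • fockBasis j := by
    ext i; by_cases hij : i = j
    · subst hij; simp [hD]
    · simp [hD, fockBasis.apply_of_ne hij]
  have hcoord : d j * B (fockBasis j) i = d i * B (fockBasis j) i := by
    simpa [hDj, hD] using congr($hBD (fockBasis j) i)
  have hne : d j - d i ≠ 0 := sub_ne_zero.2 (hd.ne hij.symm)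
  exact (mul_eq_zero.1 (by linear_combination hcoord : (d j - d i) * _ = 0)).resolve_left hne

def IsWeightedShift (z : ℓ²(ℕ, ℂ) →L[ℂ] ℓ²(ℕ, ℂ)) (w : ℕ → ℂ) : Prop :=
  ∀ j, z (fockBasis j) = w j • fockBasis (j + 1)

namespace IsWeightedShift

variable {z : ℓ²(ℕ, ℂ) →L[ℂ] ℓ²(ℕ, ℂ)} {w : ℕ → ℂ}

lemma adjoint_apply_apply (hz : IsWeightedShift z w) (x : ℓ²(ℕ, ℂ)) (i : ℕ) :
    adjoint z x i = conj (w i) * x (i + 1) := by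
  rw [← fockBasis.inner_left, adjoint_inner_right, hz, inner_smul_left, fockBasis.inner_left]

lemma adjoint_fockBasis_succ (hz : IsWeightedShift z w) (j : ℕ) :
    adjoint z (fockBasis (j + 1)) = conj (w j) • fockBasis j := by
  rw [fockBasis.eq_smul_of_apply_eq_zero (x := adjoint z _) (j := j) fun i hij => ?_]
  · simp [hz.adjoint_apply_apply, fockBasis.apply_self]
  · simp [hz.adjoint_apply_apply, fockBasis.apply_of_ne (by omega : i + 1 ≠ j + 1)]

lemma apply_apply_succ (hz : IsWeightedShift z w) (x : ℓ²(ℕ, ℂ)) (i : ℕ) :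
    z x (i + 1) = w i * x i := by
  rw [← fockBasis.inner_left, ← adjoint_inner_left, hz.adjoint_fockBasis_succ, inner_smul_left,
    fockBasis.inner_left, Complex.conj_conj]

lemma adjoint_apply_apply_apply (hz : IsWeightedShift z w) (x : ℓ²(ℕ, ℂ)) (i : ℕ) :
    adjoint z (z x) i = ((‖w i‖ ^ 2 : ℝ) : ℂ) * x i := by
  rw [hz.adjoint_apply_apply, hz.apply_apply_succ, ← mul_assoc, RCLike.conj_mul]
  push_cast; rfl

lemma apply_fockBasis_succ_apply_succ (hz : IsWeightedShift z w) (hw : ∀ j, w j ≠ 0)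
    {B : ℓ²(ℕ, ℂ) →L[ℂ] ℓ²(ℕ, ℂ)} (hBz : B ∘L z = z ∘L B) (j : ℕ) :
    B (fockBasis (j + 1)) (j + 1) = B (fockBasis j) j := by
  have h := congr($hBz (fockBasis j) (j + 1))
  simp only [comp_apply, hz j, map_smul, hz.apply_apply_succ] at h
  exact mul_left_cancel₀ (hw j) h

theorem eq_smul_one_of_comp_eq_comp (hz : IsWeightedShift z w) (hw : ∀ j, w j ≠ 0)
    (hw_inj : Function.Injective fun j => ‖w j‖) {B : ℓ²(ℕ, ℂ) →L[ℂ] ℓ²(ℕ, ℂ)}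
    (hBz : B ∘L z = z ∘L B) (hBz' : B ∘L adjoint z = adjoint z ∘L B) :
    B = B (fockBasis 0) 0 • 1 := by
  have hd : Function.Injective fun i => ((‖w i‖ ^ 2 : ℝ) : ℂ) := fun i j h =>
    hw_inj <| (sq_eq_sq₀ (norm_nonneg _) (norm_nonneg _)).1 (Complex.ofReal_injective h)
  have hBD : B ∘L (adjoint z ∘L z) = (adjoint z ∘L z) ∘L B := by
    rw [← comp_assoc, hBz', comp_assoc, hBz, comp_assoc]
  have hdiag : ∀ j, B (fockBasis j) j = B (fockBasis 0) 0 := by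
    intro j
    induction j with
    | zero => rfl
    | succ j ih => rw [hz.apply_fockBasis_succ_apply_succ hw hBz, ih]
  refine fockBasis.ext_continuousLinearMap fun j => ?_
  rw [apply_fockBasis_eq_smul_of_comp_diagonal hz.adjoint_apply_apply_apply hd hBD, hdiag]
  rfl

end IsWeightedShift

lemma sqrt_one_sub_pow_pos {q : ℝ} (hq0 : 0 ≤ q) (hq1 : q < 1) (j : ℕ) :
    0 < √(1 - q ^ (2 * (j + 1))) :=
  Real.sqrt_pos.2 <| sub_pos.2 <| pow_lt_one₀ hq0 hq1 (by omega)

lemma strictMono_sqrt_one_sub_pow {q : ℝ} (hq0 : 0 < q) (hq1 : q < 1) :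
    StrictMono fun j : ℕ => √(1 - q ^ (2 * (j + 1))) := by
  refine strictMono_nat_of_lt_succ fun j => Real.sqrt_lt_sqrt ?_ ?_
  · exact (sub_pos.2 <| pow_lt_one₀ hq0.le hq1 (by omega)).le
  · exact sub_lt_sub_left (pow_lt_pow_right_of_lt_one₀ hq0 hq1 (by omega)) 1

/-- Irreducibility of the Fock representation of the twisted CCR algebra:
any bounded operator commuting with `z` and `z*` is a scalar. -/
theorem stmt_3 (q : ℝ) (hq0 : 0 < q) (hq1 : q < 1)
    (z : lp (fun _ : ℕ => ℂ) 2 →L[ℂ] lp (fun _ : ℕ => ℂ) 2)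
    (hz : ∀ j : ℕ, z (fockBasis j) =
      (Real.sqrt (1 - q ^ (2 * (j + 1))) : ℂ) • fockBasis (j + 1)) :
    ∀ B : lp (fun _ : ℕ => ℂ) 2 →L[ℂ] lp (fun _ : ℕ => ℂ) 2,
      B ∘L z = z ∘L B → B ∘L adjoint z = adjoint z ∘L B →
      ∃ c : ℂ, B = c • (1 : lp (fun _ : ℕ => ℂ) 2 →L[ℂ] lp (fun _ : ℕ => ℂ) 2) := by
  intro B hBz hBz'
  have hw : ∀ j, (√(1 - q ^ (2 * (j + 1))) : ℂ) ≠ 0 := fun j =>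
    Complex.ofReal_ne_zero.2 (sqrt_one_sub_pow_pos hq0.le hq1 j).ne'
  have hw_inj : Function.Injective fun j => ‖(√(1 - q ^ (2 * (j + 1))) : ℂ)‖ := by
    simpa only [Complex.norm_real, Real.norm_eq_abs, abs_of_nonneg (Real.sqrt_nonneg _)]
      using (strictMono_sqrt_one_sub_pow hq0 hq1).injective
  exact ⟨_, IsWeightedShift.eq_smul_one_of_comp_eq_comp hz hw hw_inj hBz hBz'⟩
end
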